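/- Let A → B be a faithfully flat ring map and M an A-module such that M ⊗_A B is a finite projective B-module. If M is finitely presented over A, then M is finite projective over A. -/

import Mathlib

theorem stmt13_general (A B : Type*) [CommRing A] [CommRing B] [Algebra A B]
    [Module.FaithfullyFlat A B]
    (M : Type*) [AddCommGroup M] [Module A M]
    (hfp : Module.FinitePresentation A M)
    (hproj : Module.Projective B (TensorProduct A B M)) :
    Module.Finite A M ∧ Module.Projective A M := by
  have : Module.Flat B (TensorProduct A B M) := Module.Flat.of_projective
  have : Module.Flat A M := .of_flat_tensorProduct A M B
  exact ⟨inferInstance, Module.Flat.projective_of_finitePresentation⟩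

/-- Faithfully flat descent of finite projectivity: if `A → B` is faithfully
flat, `M` is a finitely presented `A`-module and `M ⊗_A B` is a finite
projective `B`-module, then `M` is finite projective over `A`. -/
theorem stmt13 (A B : Type*) [CommRing A] [CommRing B] [Algebra A B]
    [Module.FaithfullyFlat A B]
    (M : Type*) [AddCommGroup M] [Module A M]
    (hfp : Module.FinitePresentation A M)
    (hfin : Module.Finite B (TensorProduct A B M))
    (hproj : Module.Projective B (TensorProduct A B M)) :
    Module.Finite A M ∧ Module.Projective A M :=
  stmt13_general A B M hfp hproj
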